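/- arXiv:2504.19325 — 2 statements merged into one kernel-verified Lean document; each statement's English description precedes it below -/
import Mathlib

section
/- Let G be a non-degenerate [n,k,d]_q code with k > 2, Singleton defect s > 0, and n > m^{s−1}(k−1,q) + 2. Then G is projective. -/
/-!
If `G i` and `G j` (with `i ≠ j`) span the same point `P`, project from `P` onto a complementary
`(k-1)`-space. The points not equal to `P` give a code of dimension `k-1`, length at most `n-2`
and minimum distance at least `d` (a hyperplane of the quotient pulls back to a hyperplane through
`P`), so its defect is at most `s-1`. Adding points on a secant hyperplane keeps `d` and raises
the length until the defect is exactly `s-1`; the resulting code has length at least `n-2`, so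
`m^{s-1}(k-1,q) ≥ n-2`.
-/

/-- The number of points (with multiplicity) of the projective system `G`
lying on the hyperplane `ker φ`. -/
noncomputable def hypCount {F : Type*} [Field F] [DecidableEq F] {n k : ℕ}
    (G : Fin n → Fin k → F) (φ : (Fin k → F) →ₗ[F] F) : ℕ :=
  (Finset.univ.filter fun i => φ (G i) = 0).card

/-- `G` is (the projective system of) a non-degenerate linear `[n,k,d]_q` code:
an `n`-multiset of nonzero points spanning `PG(k-1,q)`, every hyperplane containing
at most `n - d` points, and some hyperplane (a secant) containing exactly `n - d`. -/
def IsCodePS (F : Type*) [Field F] [DecidableEq F] (n k d : ℕ)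
    (G : Fin n → Fin k → F) : Prop :=
  0 < d ∧ (∀ i, G i ≠ 0) ∧ Submodule.span F (Set.range G) = ⊤ ∧
  (∀ φ : (Fin k → F) →ₗ[F] F, φ ≠ 0 → hypCount G φ + d ≤ n) ∧
  (∃ φ : (Fin k → F) →ₗ[F] F, φ ≠ 0 ∧ hypCount G φ + d = n)

/-- `mPar F s k` is `m^s(k,q)`: the maximum length of a non-degenerate
`[n,k,d]_q` code with Singleton defect `s = n - k + 1 - d`. -/
noncomputable def mPar (F : Type*) [Field F] [Fintype F] [DecidableEq F] (s k : ℕ) : ℕ :=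
  sSup {n : ℕ | ∃ d : ℕ, ∃ G : Fin n → Fin k → F, IsCodePS F n k d G ∧ d + k + s = n + 1}

open Finset Module

section LinearAlgebra

variable {F V : Type*} [Field F] [AddCommGroup V] [Module F V] [FiniteDimensional F V]

theorem exists_ne_zero_apply_eq_zero (hV : 2 ≤ finrank F V) (φ : Dual F V) :
    ∃ x : V, x ≠ 0 ∧ φ x = 0 := by
  have hrange : finrank F (LinearMap.range φ) ≤ 1 :=
    (Submodule.finrank_le _).trans (finrank_self F).le
  have hker : 0 < finrank F (LinearMap.ker φ) := by
    have := φ.finrank_range_add_finrank_ker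
    omega
  obtain ⟨⟨x, hx⟩, hx0⟩ := finrank_pos_iff_exists_ne_zero.mp hker
  exact ⟨x, by simpa using hx0, hx⟩

theorem exists_dual_ne_zero_apply_eq_zero (hV : 2 ≤ finrank F V) (x : V) :
    ∃ φ : Dual F V, φ ≠ 0 ∧ φ x = 0 :=
  exists_ne_zero_apply_eq_zero (by rwa [Subspace.dual_finrank_eq]) (Dual.eval F V x)

theorem exists_surjective_apply_eq_zero {K : ℕ} (hV : finrank F V = K + 1) {x : V}
    (hx : x ≠ 0) : ∃ π : V →ₗ[F] (Fin K → F), Function.Surjective π ∧ π x = 0 := by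
  have hquot : finrank F (V ⧸ F ∙ x) = finrank F (Fin K → F) := by
    have := (F ∙ x).finrank_quotient_add_finrank
    rw [finrank_span_singleton hx] at this
    simp only [finrank_fin_fun]
    omega
  refine ⟨(LinearEquiv.ofFinrankEq _ _ hquot).toLinearMap ∘ₗ (F ∙ x).mkQ,
    (LinearEquiv.surjective _).comp (Submodule.mkQ_surjective _), ?_⟩
  simp [(Submodule.Quotient.mk_eq_zero _).mpr (Submodule.mem_span_singleton_self x)]

end LinearAlgebra

section Codes

variable {F : Type*} [Field F] [DecidableEq F] {n k d : ℕ}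

theorem card_le_card_dual_mul_of_hypCount_le [Finite F] (hk : 2 ≤ k) (G : Fin n → Fin k → F)
    {c : ℕ} (hc : ∀ φ, φ ≠ 0 → hypCount G φ ≤ c) :
    n ≤ Nat.card (Dual F (Fin k → F)) * c := by
  classical
  have := Module.finite_of_finite F (M := Dual F (Fin k → F))
  let := Fintype.ofFinite (Dual F (Fin k → F))
  set H : Finset (Dual F (Fin k → F)) := univ.filter (· ≠ 0)
  have hcover : (univ : Finset (Fin n)) ⊆ H.biUnion fun φ => univ.filter fun i => φ (G i) = 0 := by
    intro i _
    obtain ⟨φ, hφ, hφi⟩ := exists_dual_ne_zero_apply_eq_zero (F := F) (by simpa) (G i)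
    simpa [H] using ⟨φ, hφ, hφi⟩
  calc n = #(univ : Finset (Fin n)) := by simp
    _ ≤ ∑ φ ∈ H, hypCount G φ := (card_le_card hcover).trans card_biUnion_le
    _ ≤ #H * c := by simpa using sum_le_card_nsmul H _ c (fun φ hφ => hc φ (by simpa [H] using hφ))
    _ ≤ Nat.card (Dual F (Fin k → F)) * c := by
        rw [Nat.card_eq_fintype_card]; gcongr; exact card_le_univ H

theorem bddAbove_lengths_of_defect [Fintype F] (hk : 2 ≤ k) (s : ℕ) :
    BddAbove {n : ℕ | ∃ d : ℕ, ∃ G : Fin n → Fin k → F, IsCodePS F n k d G ∧ d + k + s = n + 1} :=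
  ⟨Nat.card (Dual F (Fin k → F)) * (k + s), fun _ ⟨_, G, hG, hs⟩ =>
    card_le_card_dual_mul_of_hypCount_le hk G fun φ hφ => by have := hG.2.2.2.1 φ hφ; omega⟩

theorem hypCount_snoc (G : Fin n → Fin k → F) (x : Fin k → F) (φ : Dual F (Fin k → F)) :
    hypCount (Fin.snoc G x) φ = hypCount G φ + if φ x = 0 then 1 else 0 := by
  rw [hypCount, hypCount, card_filter, card_filter, Fin.sum_univ_castSucc]
  simp

theorem IsCodePS.exists_succ (hk : 2 ≤ k) {G : Fin n → Fin k → F} (hG : IsCodePS F n k d G) :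
    ∃ G' : Fin (n + 1) → Fin k → F, IsCodePS F (n + 1) k d G' := by
  obtain ⟨hd, hnz, hspan, hbound, φ₀, hφ₀, hsec⟩ := hG
  obtain ⟨x, hx, hφ₀x⟩ := exists_ne_zero_apply_eq_zero (by simpa) φ₀
  refine ⟨Fin.snoc G x, hd, Fin.lastCases (by simpa) (by simpa), ?_, fun φ hφ => ?_, φ₀, hφ₀, ?_⟩
  · refine eq_top_iff.mpr (hspan ▸ Submodule.span_mono ?_)
    rintro _ ⟨i, rfl⟩
    exact ⟨i.castSucc, by simp⟩
  · have := hbound φ hφ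
    rw [hypCount_snoc]
    split <;> omega
  · rw [hypCount_snoc, if_pos hφ₀x]
    omega

theorem IsCodePS.exists_add (hk : 2 ≤ k) {G : Fin n → Fin k → F} (hG : IsCodePS F n k d G) (t : ℕ) :
    ∃ G' : Fin (n + t) → Fin k → F, IsCodePS F (n + t) k d G' := by
  induction t with
  | zero => exact ⟨G, hG⟩
  | succ t ih =>
    obtain ⟨G', hG'⟩ := ih
    exact hG'.exists_succ hk

theorem IsCodePS.add_le_mPar_add_one [Fintype F] (hk : 2 ≤ k) {s : ℕ} {G : Fin n → Fin k → F}
    (hG : IsCodePS F n k d G) (hdefect : n + 1 ≤ d + k + s) : d + k + s ≤ mPar F s k + 1 := by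
  obtain ⟨G', hG'⟩ := hG.exists_add hk (d + k + s - 1 - n)
  have := le_csSup (bddAbove_lengths_of_defect hk s) ⟨d, G', hG', by omega⟩
  rw [← mPar] at this
  omega

theorem exists_isCodePS_of_hypCount_add_le [Finite F] (hk : 0 < k) (hd : 0 < d)
    {G : Fin n → Fin k → F} (hnz : ∀ i, G i ≠ 0) (hspan : Submodule.span F (Set.range G) = ⊤)
    (hbound : ∀ φ : Dual F (Fin k → F), φ ≠ 0 → hypCount G φ + d ≤ n) :
    ∃ d', d ≤ d' ∧ IsCodePS F n k d' G := by
  classical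
  have := Module.finite_of_finite F (M := Dual F (Fin k → F))
  let := Fintype.ofFinite (Dual F (Fin k → F))
  obtain ⟨φ₁, hφ₁⟩ : ∃ φ : Dual F (Fin k → F), φ ≠ 0 :=
    finrank_pos_iff_exists_ne_zero (R := F).mp (by simpa [Subspace.dual_finrank_eq])
  obtain ⟨φ₀, hφ₀, hmax⟩ :=
    (univ.filter (· ≠ 0)).exists_max_image (hypCount G) ⟨φ₁, by simpa using hφ₁⟩
  simp only [mem_filter, mem_univ, true_and] at hφ₀ hmax
  have := hbound φ₀ hφ₀
  refine ⟨n - hypCount G φ₀, by omega, by omega, hnz, hspan, fun φ hφ => ?_, φ₀, hφ₀, by omega⟩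
  have := hmax φ hφ
  omega

theorem hypCount_comp_equivFin_symm (U : Finset (Fin n)) (G : Fin n → Fin k → F)
    (φ : Dual F (Fin k → F)) :
    hypCount (fun t => G (U.equivFin.symm t)) φ = #(U.filter fun i => φ (G i) = 0) := by
  refine card_bij (fun t _ => U.equivFin.symm t) (fun t ht => ?_) (fun t _ t' _ h => ?_) ?_
  · simpa using ht
  · simpa [Subtype.ext_iff] using h
  · intro i hi
    rw [mem_filter] at hi
    exact ⟨U.equivFin ⟨i, hi.1⟩, by simpa using hi.2, by simp⟩

theorem hypCount_comp_equivFin_symm_add_card {K : ℕ} (G : Fin n → Fin k → F)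
    (π : (Fin k → F) →ₗ[F] (Fin K → F)) (ψ : Dual F (Fin K → F)) :
    hypCount (fun t => π (G ((univ.filter fun i => π (G i) ≠ 0).equivFin.symm t))) ψ
      + #{i | π (G i) = 0} = hypCount G (ψ ∘ₗ π) := by
  rw [hypCount_comp_equivFin_symm _ (fun i => π (G i)), hypCount, ← card_filter_add_card_filter_not
    (s := univ.filter fun i => (ψ ∘ₗ π) (G i) = 0) (fun i => π (G i) ≠ 0)]
  congr 1 <;> congr 1 <;> ext i <;> by_cases h : π (G i) = 0 <;> simp [h]

theorem IsCodePS.exists_comp_of_surjective [Finite F] {K : ℕ} (hK : 0 < K)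
    {G : Fin n → Fin k → F} (hG : IsCodePS F n k d G) (π : (Fin k → F) →ₗ[F] (Fin K → F))
    (hπ : Function.Surjective π) :
    ∃ d', d ≤ d' ∧ ∃ G' : Fin #{i | π (G i) ≠ 0} → Fin K → F,
      IsCodePS F #{i | π (G i) ≠ 0} K d' G' := by
  obtain ⟨hd, -, hspan, hbound, -⟩ := hG
  set U := univ.filter fun i => π (G i) ≠ 0
  have hmemU : ∀ i, i ∈ U ↔ π (G i) ≠ 0 := by simp [U]
  refine (exists_isCodePS_of_hypCount_add_le hK hd (G := fun t => π (G (U.equivFin.symm t)))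
    (fun t => (hmemU _).mp (U.equivFin.symm t).2) ?_ ?_).imp fun _ ⟨hdd', hG'⟩ => ⟨hdd', _, hG'⟩
  · rw [eq_top_iff, ← LinearMap.range_eq_top.mpr hπ, LinearMap.range_eq_map, ← hspan,
      Submodule.map_span, Submodule.span_le]
    rintro _ ⟨_, ⟨i, rfl⟩, rfl⟩
    by_cases hi : π (G i) = 0
    · rw [SetLike.mem_coe, hi]
      exact zero_mem _
    · exact Submodule.subset_span ⟨U.equivFin ⟨i, (hmemU i).mpr hi⟩, by simp⟩
  · intro ψ hψ
    have hcomp : ψ ∘ₗ π ≠ 0 := fun h => hψ <| LinearMap.ext fun y => by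
      obtain ⟨x, rfl⟩ := hπ y
      exact LinearMap.congr_fun h x
    have hsplit : hypCount (fun t => π (G (U.equivFin.symm t))) ψ + #{i | π (G i) = 0}
        = hypCount G (ψ ∘ₗ π) := hypCount_comp_equivFin_symm_add_card G π ψ
    have hcard : #{i | π (G i) = 0} + #U = n := by
      simpa [U] using card_filter_add_card_filter_not (s := univ) (fun i => π (G i) = 0)
    have := hbound _ hcomp
    omega

end Codes

theorem long_code_projective_of_mPar_general (F : Type*) [Field F] [Fintype F] [DecidableEq F]
    (n k d s : ℕ) (G : Fin n → Fin k → F)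
    (hk : 2 < k) (hG : IsCodePS F n k d G) (hs : d + k + s = n + 1)
    (hn : mPar F (s - 1) (k - 1) + 2 < n) :
    ∀ i j : Fin n, (∃ c : F, G i = c • G j) → i = j := by
  rintro i j ⟨c, hij⟩
  by_contra hne
  obtain ⟨π, hπ, hπj⟩ := exists_surjective_apply_eq_zero (K := k - 1)
    (by rw [finrank_fin_fun]; omega) (hG.2.1 j)
  have hπi : π (G i) = 0 := by rw [hij, map_smul, hπj, smul_zero]
  obtain ⟨d', hdd', G', hG'⟩ := hG.exists_comp_of_surjective (by omega) π hπ
  have hcard : #{i | π (G i) ≠ 0} + 2 ≤ n := by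
    have hsub : ({l | π (G l) ≠ 0} : Finset (Fin n)) ⊆ {i, j}ᶜ := fun l hl => by
      simp only [mem_filter, mem_univ, true_and] at hl
      simp only [mem_compl, mem_insert, mem_singleton, not_or]
      exact ⟨fun h => hl (h ▸ hπi), fun h => hl (h ▸ hπj)⟩
    have := card_le_card hsub
    rw [card_compl, card_pair hne, Fintype.card_fin] at this
    omega
  have := hG'.add_le_mPar_add_one (s := s - 1) (by omega) (by omega)
  omega

/-- If `G` is a non-degenerate `[n,k,d]_q` code with `k > 2`, Singleton defect `s > 0`,
and `n > m^{s-1}(k-1,q) + 2`, then `G` is projective (all multiplicities are `1`). -/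
theorem long_code_projective_of_mPar (F : Type*) [Field F] [Fintype F] [DecidableEq F]
    (n k d s : ℕ) (G : Fin n → Fin k → F)
    (hk : 2 < k) (hspos : 0 < s) (hG : IsCodePS F n k d G) (hs : d + k + s = n + 1)
    (hn : mPar F (s - 1) (k - 1) + 2 < n) :
    ∀ i j : Fin n, (∃ c : F, G i = c • G j) → i = j :=
  long_code_projective_of_mPar_general F n k d s G hk hG hs hn
end

section
/- Let G be a non-degenerate [n,k,d]_q code with k ≥ 3 and Singleton defect s, whose dual is AMDS (defect t = 1). Then the points of G on any secant hyperplane form a (k+s−1)-arc in PG(k−2,q); consequently k + s − 1 ≤ m(k−1,q), the maximum length of an MDS code of dimension k−1 over F_q. -/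
/-- The dual code of the code with projective system `G` has minimum distance `w`:
every subfamily of fewer than `w` points is linearly independent, and some
subfamily of `w` points is linearly dependent. -/
def HasDualDist (F : Type*) [Field F] {n k : ℕ} (G : Fin n → Fin k → F) (w : ℕ) : Prop :=
  (∀ S : Finset (Fin n), S.card < w → LinearIndependent F (fun i : {x // x ∈ S} => G i.1)) ∧
  (∃ S : Finset (Fin n), S.card = w ∧ ¬ LinearIndependent F (fun i : {x // x ∈ S} => G i.1))

/-!
Because the dual has minimum distance `k`, any `k - 1` points of `G` are linearly independent.
A secant hyperplane `ker φ` is a `(k-1)`-dimensional space holding `k + s - 1` of these points,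
any `k - 1` of which are therefore independent: in coordinates of `ker φ` they form an arc,
i.e. the projective system of an MDS code of length `k + s - 1` and dimension `k - 1`. Its
length is at most `m(k-1,q)`, the supremum being finite because for dimension at least `2` every
point of a code lies on a hyperplane, so no point has multiplicity above `n - d`.
-/

open Module Submodule Finset

section Arc

variable {F : Type*} [Field F] {V W : Type*} [AddCommGroup V] [Module F V]
  [AddCommGroup W] [Module F W] {ι ι' : Type*}

variable (F) in
/-- For `r = finrank F V` these are the arcs of the projective space of `V`. -/
def IsArc (r : ℕ) (v : ι → V) : Prop :=
  ∀ s : Finset ι, #s ≤ r → LinearIndepOn F v s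

variable {r : ℕ} {v : ι → V}

theorem IsArc.comp_injective (hv : IsArc F r v) {f : ι' → ι} (hf : Function.Injective f) :
    IsArc F r (v ∘ f) := fun s hs => by
  have h := hv (s.map ⟨f, hf⟩) (by simpa using hs)
  rw [coe_map] at h
  exact h.comp_of_image hf.injOn

theorem IsArc.codRestrict (hv : IsArc F r v) (p : Submodule F V) (hp : ∀ i, v i ∈ p) :
    IsArc F r (fun i => (⟨v i, hp i⟩ : p)) := fun s hs =>
  LinearIndepOn.of_comp p.subtype (hv s hs)

theorem IsArc.map_linearEquiv (hv : IsArc F r v) (e : V ≃ₗ[F] W) : IsArc F r (e ∘ v) :=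
  fun s hs => (hv s hs).map' e.toLinearMap e.ker

theorem IsArc.ne_zero (hv : IsArc F r v) (hr : 1 ≤ r) (i : ι) : v i ≠ 0 :=
  (linearIndepOn_singleton_iff F).1 (by simpa using hv {i} (by simpa using hr))

theorem IsArc.span_eq_top [Fintype ι] [FiniteDimensional F V] (hv : IsArc F (finrank F V) v)
    (hcard : finrank F V ≤ Fintype.card ι) : span F (Set.range v) = ⊤ := by
  obtain ⟨t, -, ht⟩ := exists_subset_card_eq (s := (univ : Finset ι)) (by simpa using hcard)
  have htop := (hv t ht.le).span_eq_top_of_card_eq_finrank' (by simpa using ht)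
  exact top_le_iff.1 (htop ▸ span_mono (Set.range_comp_subset_range _ v))

theorem IsArc.card_filter_apply_eq_zero_lt [Fintype ι] [DecidableEq F] [FiniteDimensional F V]
    (hv : IsArc F (finrank F V) v) {ψ : V →ₗ[F] F} (hψ : ψ ≠ 0) :
    #{i | ψ (v i) = 0} < finrank F V := by
  by_contra! hle
  obtain ⟨t, hts, ht⟩ := exists_subset_card_eq hle
  have hker : ∀ i : t, v i ∈ LinearMap.ker ψ := fun i => by simpa using (mem_filter.1 (hts i.2)).2
  have hind : LinearIndependent F (fun i : t => (⟨v i, hker i⟩ : LinearMap.ker ψ)) :=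
    LinearIndependent.of_comp (LinearMap.ker ψ).subtype (hv t ht.le)
  have hle_ker : #t ≤ finrank F (LinearMap.ker ψ) := by simpa using hind.fintype_card_le_finrank
  have := Dual.finrank_ker_add_one_of_ne_zero hψ
  omega

theorem exists_dual_ne_zero_forall_eq_zero [FiniteDimensional F V] (s : Finset V)
    (hs : #s < finrank F V) : ∃ ψ : V →ₗ[F] F, ψ ≠ 0 ∧ ∀ x ∈ s, ψ x = 0 := by
  have hlt : span F (s : Set V) < ⊤ :=
    lt_top_of_finrank_lt_finrank ((finrank_span_finset_le_card s).trans_lt hs)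
  obtain ⟨ψ, hψ, hle⟩ := (span F (s : Set V)).exists_le_ker_of_lt_top hlt
  exact ⟨ψ, hψ, fun x hx => hle (subset_span hx)⟩

end Arc

section Code

variable {F : Type*} [Field F] [DecidableEq F]

theorem isCodePS_of_isArc {N K : ℕ} (G : Fin N → Fin K → F) (hG : IsArc F K G)
    (hK : 1 ≤ K) (hKN : K ≤ N) : IsCodePS F N K (N + 1 - K) G := by
  have hG' : IsArc F (finrank F (Fin K → F)) G := by rwa [finrank_fin_fun]
  refine ⟨by omega, hG.ne_zero hK, hG'.span_eq_top (by simpa using hKN), fun ψ hψ => ?_, ?_⟩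
  · have := hG'.card_filter_apply_eq_zero_lt hψ
    rw [finrank_fin_fun] at this
    unfold hypCount
    omega
  · obtain ⟨t, -, ht⟩ := exists_subset_card_eq (s := (univ : Finset (Fin N))) (n := K - 1)
      (by rw [card_univ, Fintype.card_fin]; omega)
    obtain ⟨ψ, hψ, hzero⟩ := exists_dual_ne_zero_forall_eq_zero (F := F) (t.image G)
      (card_image_le.trans_lt (by rw [ht, finrank_fin_fun]; omega))
    have hsub : t ⊆ univ.filter fun i => ψ (G i) = 0 := fun i hi =>
      mem_filter.2 ⟨mem_univ i, hzero _ (mem_image_of_mem G hi)⟩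
    have := card_le_card hsub
    have := hG'.card_filter_apply_eq_zero_lt hψ
    rw [finrank_fin_fun] at this
    exact ⟨ψ, hψ, by unfold hypCount; omega⟩

theorem IsArc.exists_restrict_ker {n k r : ℕ} {G : Fin n → Fin k → F} (hG : IsArc F r G)
    {φ : (Fin k → F) →ₗ[F] F} (hφ : φ ≠ 0) :
    ∃ G' : Fin (hypCount G φ) → Fin (k - 1) → F, IsArc F r G' := by
  let e := (univ.filter fun i => φ (G i) = 0).orderEmbOfFin rfl
  have hmem : ∀ j, G (e j) ∈ LinearMap.ker φ := fun j =>
    LinearMap.mem_ker.2 (mem_filter.1 (orderEmbOfFin_mem _ rfl j)).2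
  have hrank : finrank F (LinearMap.ker φ) = finrank F (Fin (k - 1) → F) := by
    have := Dual.finrank_ker_add_one_of_ne_zero hφ
    rw [finrank_fin_fun] at this ⊢
    omega
  exact ⟨_, ((hG.comp_injective e.injective).codRestrict _ hmem).map_linearEquiv
    (LinearEquiv.ofFinrankEq _ _ hrank)⟩

theorem IsCodePS.length_le [Fintype F] {N K d : ℕ} {G : Fin N → Fin K → F}
    (hG : IsCodePS F N K d G) (hK : 2 ≤ K) : N ≤ (N - d) * Fintype.card (Fin K → F) := by
  obtain ⟨-, -, -, hmax, -⟩ := hG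
  have hfiber : ∀ x ∈ (univ : Finset (Fin K → F)), #{i | G i = x} ≤ N - d := fun x _ => by
    obtain ⟨ψ, hψ, hx⟩ := exists_dual_ne_zero_forall_eq_zero (F := F) {x}
      (by rw [card_singleton, finrank_fin_fun]; omega)
    have hsub : ({i | G i = x} : Finset (Fin N)) ⊆ univ.filter fun i => ψ (G i) = 0 :=
        fun i hi => by
      simp only [mem_filter, mem_univ, true_and] at hi ⊢
      simpa [hi] using hx
    have := card_le_card hsub
    have := hmax ψ hψ
    unfold hypCount at this
    omega
  simpa using card_le_mul_card_image_of_maps_to (s := univ) (fun i _ => mem_univ (G i)) _ hfiber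

theorem le_mPar [Fintype F] {N K d s : ℕ} {G : Fin N → Fin K → F}
    (hG : IsCodePS F N K d G) (hs : d + K + s = N + 1) (hK : 2 ≤ K) : N ≤ mPar F s K := by
  refine le_csSup ⟨(K + s - 1) * Fintype.card (Fin K → F), ?_⟩ ⟨d, G, hG, hs⟩
  rintro N' ⟨d', G', hG', hs'⟩
  have := hG'.length_le hK
  rwa [show N' - d' = K + s - 1 by omega] at this

end Code

theorem secant_is_arc_general (F : Type*) [Field F] [Fintype F] [DecidableEq F]
    (n k d s : ℕ) (G : Fin n → Fin k → F)
    (hk : 3 ≤ k) (hs : d + k + s = n + 1)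
    (hdual : HasDualDist F G k)
    (φ : (Fin k → F) →ₗ[F] F) (hφ : φ ≠ 0) (hsec : hypCount G φ + d = n) :
    (∀ S : Finset (Fin n), (∀ i ∈ S, φ (G i) = 0) → S.card ≤ k - 1 →
      LinearIndependent F (fun i : {x // x ∈ S} => G i.1)) ∧
    k + s ≤ mPar F 0 (k - 1) + 1 := by
  have hG : IsArc F (k - 1) G := fun S hS => hdual.1 S (by omega)
  refine ⟨fun S _ hS => hG S hS, ?_⟩
  obtain ⟨G', hG'⟩ := hG.exists_restrict_ker hφ
  have := le_mPar (s := 0) (isCodePS_of_isArc G' hG' (by omega) (by omega)) (by omega) (by omega)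
  omega

/-- Let `G` be a non-degenerate `[n,k,d]_q` code, `k ≥ 3`, with Singleton defect `s`,
whose dual is AMDS (`t = 1`, i.e. dual distance `k`). Then the points of `G` on any
secant hyperplane `ker φ` form a `(k+s-1)`-arc in `PG(k-2,q)`: every subset of at most
`k - 1` of them is linearly independent. Consequently `k + s - 1 ≤ m(k-1,q)`,
the maximum length of an MDS code of dimension `k - 1`. -/
theorem secant_is_arc (F : Type*) [Field F] [Fintype F] [DecidableEq F]
    (n k d s : ℕ) (G : Fin n → Fin k → F)
    (hk : 3 ≤ k) (hG : IsCodePS F n k d G) (hs : d + k + s = n + 1)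
    (hdual : HasDualDist F G k)
    (φ : (Fin k → F) →ₗ[F] F) (hφ : φ ≠ 0) (hsec : hypCount G φ + d = n) :
    (∀ S : Finset (Fin n), (∀ i ∈ S, φ (G i) = 0) → S.card ≤ k - 1 →
      LinearIndependent F (fun i : {x // x ∈ S} => G i.1)) ∧
    k + s ≤ mPar F 0 (k - 1) + 1 :=
  secant_is_arc_general F n k d s G hk hs hdual φ hφ hsec
end
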